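/- Let d ≥ 2 and let Θ ⊆ ℝ^d be a nonempty compact set of positive reach which is a C³-hypersurface in the following sense: for every θ ∈ Θ there exist ε > 0, a linear isometric isomorphism T: ℝ^{d−1} × ℝ → ℝ^d, and a three times continuously differentiable function b: ℝ^{d−1} → ℝ such that Θ ∩ B(θ, ε) = { T(y, b(y)) : y ∈ ℝ^{d−1} } ∩ B(θ, ε), where B(θ, ε) is the open Euclidean ball. Then for all x, y ∈ ℝ^d ∖ Θ and all η > 0 there exists a curve γ: [0,1] → ℝ^d with γ(0) = x, γ(1) = y, ℓ(γ) < ‖y − x‖ + η, and such that the set γ([0,1]) ∩ Θ is finite. -/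

import Mathlib

open Set ENNReal Metric

/-- The length of a curve `γ : ℝ → ℝ^d` (considered on the parameter interval `[0,1]`):
the supremum over all partitions `0 = t₀ < ⋯ < tₙ = 1` of `∑ ‖γ tₖ - γ tₖ₋₁‖`,
possibly infinite.  This coincides with the total variation of `γ` on `[0,1]`. -/
noncomputable def curveLength {d : ℕ} (γ : ℝ → EuclideanSpace ℝ (Fin d)) : ℝ≥0∞ :=
  eVariationOn γ (Set.Icc 0 1)

/-- A set `Θ ⊆ ℝ^d` is of positive reach if points sufficiently close to `Θ` have a
unique nearest point in `Θ`. -/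
def HasPositiveReach {d : ℕ} (Θ : Set (EuclideanSpace ℝ (Fin d))) : Prop :=
  ∃ ε > (0 : ℝ), ∀ x : EuclideanSpace ℝ (Fin d), Metric.infDist x Θ < ε →
    ∃! p : EuclideanSpace ℝ (Fin d), p ∈ Θ ∧ ‖x - p‖ = Metric.infDist x Θ

/-- `Θ ⊆ ℝ^d` is a `C³`-hypersurface: locally, after an isometric linear change of
coordinates, it is the graph of a `C³` function `b : ℝ^{d-1} → ℝ`. -/
def IsC3Hypersurface {d : ℕ} (Θ : Set (EuclideanSpace ℝ (Fin d))) : Prop :=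
  ∀ θ ∈ Θ, ∃ ε > (0 : ℝ),
    ∃ T : WithLp 2 (EuclideanSpace ℝ (Fin (d - 1)) × ℝ) ≃ₗᵢ[ℝ] EuclideanSpace ℝ (Fin d),
    ∃ b : EuclideanSpace ℝ (Fin (d - 1)) → ℝ, ContDiff ℝ 3 b ∧
      Θ ∩ Metric.ball θ ε =
        {z : EuclideanSpace ℝ (Fin d) | ∃ y : EuclideanSpace ℝ (Fin (d - 1)),
          z = T ((WithLp.equiv 2 (EuclideanSpace ℝ (Fin (d - 1)) × ℝ)).symm (y, b y))}
          ∩ Metric.ball θ ε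

/-!
Go from `x` in a straight line to a point `z` close to `y`, then straight to `y` inside a ball
around `y` that misses `Θ`. If the segment `[x, z]` met `Θ` infinitely often, at an accumulation
point the line `xz` would be tangent to `Θ`. In a chart where `Θ` is the graph of `b`, the
endpoints `z` of such tangent lines are critical values of the `d`-dimensional cone map
`(u, s) ↦ x + s • (graph u - x)`, hence form a null set; finitely many charts cover `Θ`, so almost
every `z` works.
-/

open Filter Topology MeasureTheory

section TwoSegmentPath

variable {E : Type*} [NormedAddCommGroup E] [NormedSpace ℝ E]

theorem eVariationOn_Icc_le_of_dist_le {X : Type*} [PseudoMetricSpace X] {f : ℝ → X}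
    {c e K : ℝ} (hK : 0 ≤ K) (hf : ∀ s ∈ Icc c e, ∀ t ∈ Icc c e, dist (f s) (f t) ≤ K * dist s t) :
    eVariationOn f (Icc c e) ≤ ENNReal.ofReal (K * (e - c)) :=
  calc eVariationOn (f ∘ id) (Icc c e)
      ≤ Real.toNNReal K * eVariationOn id (Icc c e) :=
        (LipschitzOnWith.of_dist_le' hf).comp_eVariationOn_le (mapsTo_id _)
    _ ≤ Real.toNNReal K * ENNReal.ofReal (e - c) := by gcongr; simp
    _ = ENNReal.ofReal (K * (e - c)) := by rw [ENNReal.ofReal_mul hK]; rfl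

def twoSegmentPath (x z y : E) (s : ℝ) : E :=
  x + min (2 * s) 1 • (z - x) + max (2 * s - 1) 0 • (y - z)

variable (x z y : E)

theorem continuous_twoSegmentPath : Continuous (twoSegmentPath x z y) := by
  unfold twoSegmentPath
  fun_prop

@[simp]
theorem twoSegmentPath_zero : twoSegmentPath x z y 0 = x := by
  norm_num [twoSegmentPath]

@[simp]
theorem twoSegmentPath_one : twoSegmentPath x z y 1 = y := by
  norm_num [twoSegmentPath]

theorem twoSegmentPath_of_le_half {s : ℝ} (hs : s ≤ 1 / 2) :
    twoSegmentPath x z y s = AffineMap.lineMap x z (2 * s) := by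
  rw [twoSegmentPath, AffineMap.lineMap_apply_module', min_eq_left (by linarith),
    max_eq_right (by linarith), zero_smul, add_zero, add_comm]

theorem twoSegmentPath_of_half_le {s : ℝ} (hs : 1 / 2 ≤ s) :
    twoSegmentPath x z y s = AffineMap.lineMap z y (2 * s - 1) := by
  rw [twoSegmentPath, AffineMap.lineMap_apply_module', min_eq_right (by linarith),
    max_eq_left (by linarith), one_smul, add_sub_cancel, add_comm]

theorem twoSegmentPath_image_Icc_subset :
    twoSegmentPath x z y '' Icc 0 1 ⊆ segment ℝ x z ∪ segment ℝ z y := by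
  rintro _ ⟨s, ⟨hs₀, hs₁⟩, rfl⟩
  rw [segment_eq_image_lineMap, segment_eq_image_lineMap]
  rcases le_total s (1 / 2) with hs | hs
  · exact Or.inl ⟨2 * s, ⟨by linarith, by linarith⟩, (twoSegmentPath_of_le_half x z y hs).symm⟩
  · exact Or.inr ⟨2 * s - 1, ⟨by linarith, by linarith⟩, (twoSegmentPath_of_half_le x z y hs).symm⟩

theorem eVariationOn_twoSegmentPath_le :
    eVariationOn (twoSegmentPath x z y) (Icc 0 1) ≤ ENNReal.ofReal (dist x z + dist z y) := by
  have h₁ : eVariationOn (twoSegmentPath x z y) (Icc 0 (1 / 2)) ≤ ENNReal.ofReal (dist x z) := by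
    rw [eVariationOn.eq_of_eqOn fun s hs => twoSegmentPath_of_le_half x z y hs.2]
    convert eVariationOn_Icc_le_of_dist_le (K := 2 * dist x z) (by positivity)
      fun s _ t _ => le_of_eq ?_ using 2
    · ring
    · rw [dist_lineMap_lineMap, Real.dist_eq, Real.dist_eq, ← mul_sub, abs_mul, abs_two]
      ring
  have h₂ : eVariationOn (twoSegmentPath x z y) (Icc (1 / 2) 1) ≤ ENNReal.ofReal (dist z y) := by
    rw [eVariationOn.eq_of_eqOn fun s hs => twoSegmentPath_of_half_le x z y hs.1]
    convert eVariationOn_Icc_le_of_dist_le (K := 2 * dist z y) (by positivity)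
      fun s _ t _ => le_of_eq ?_ using 2
    · ring
    · rw [dist_lineMap_lineMap, dist_sub_right, Real.dist_eq, Real.dist_eq, ← mul_sub,
        abs_mul, abs_two]
      ring
  have hsplit := eVariationOn.Icc_add_Icc (twoSegmentPath x z y) (s := univ) (c := 1)
    (show (0 : ℝ) ≤ 1 / 2 by norm_num) (by norm_num) (mem_univ _)
  simp only [univ_inter] at hsplit
  rw [← hsplit, ENNReal.ofReal_add dist_nonneg dist_nonneg]
  exact add_le_add h₁ h₂

end TwoSegmentPath

section Graph

variable {E F : Type*} [NormedAddCommGroup E] [NormedSpace ℝ E]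
  [NormedAddCommGroup F] [NormedSpace ℝ F] (L : (F × ℝ) ≃L[ℝ] E) (b : F → ℝ)

def graphMap (u : F) : E := L (u, b u)

def IsGraphTangent (u : F) (v : E) : Prop :=
  fderiv ℝ b u (L.symm v).1 = (L.symm v).2

variable {L b}

theorem IsGraphTangent.smul {u : F} {v : E} (h : IsGraphTangent L b u v) (t : ℝ) :
    IsGraphTangent L b u (t • v) := by
  simp only [IsGraphTangent, map_smul, Prod.smul_fst, Prod.smul_snd, smul_eq_mul] at h ⊢
  rw [h]

theorem hasFDerivAt_graphMap {u : F} (hb : DifferentiableAt ℝ b u) :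
    HasFDerivAt (graphMap L b)
      ((L : (F × ℝ) →L[ℝ] E).comp ((ContinuousLinearMap.id ℝ F).prod (fderiv ℝ b u))) u :=
  L.hasFDerivAt.comp u ((hasFDerivAt_id u).prodMk hb.hasFDerivAt)

theorem fderiv_graphMap_apply {u : F} (hb : DifferentiableAt ℝ b u) (c : F) :
    fderiv ℝ (graphMap L b) u c = L (c, fderiv ℝ b u c) := by
  rw [(hasFDerivAt_graphMap hb).fderiv]
  rfl

theorem IsGraphTangent.of_frequently_mem_range {u₀ : F} {x v : E} {t₀ : ℝ}
    (hb : DifferentiableAt ℝ b u₀) (h₀ : graphMap L b u₀ = x + t₀ • v)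
    (h : ∃ᶠ t in 𝓝[≠] t₀, x + t • v ∈ range (graphMap L b)) :
    IsGraphTangent L b u₀ v := by
  set a := (L.symm x).1
  set β := (L.symm x).2
  set c := (L.symm v).1
  set q := (L.symm v).2
  have hline : ∀ u t, graphMap L b u = x + t • v → u = a + t • c ∧ b u = β + t * q := by
    intro u t hu
    have := congrArg L.symm hu
    simp only [graphMap, ContinuousLinearEquiv.symm_apply_apply, map_add, map_smul] at this
    exact ⟨congrArg Prod.fst this, congrArg Prod.snd this⟩
  obtain ⟨rfl, hbu₀⟩ := hline u₀ t₀ h₀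
  have hderiv : HasDerivAt (fun t : ℝ => b (a + t • c)) (fderiv ℝ b (a + t₀ • c) c) t₀ :=
    hb.hasFDerivAt.comp_hasDerivAt t₀ <| by
      simpa using ((hasDerivAt_id t₀).smul_const c).const_add a
  have hslope : ∃ᶠ t in 𝓝[≠] t₀, slope (fun t : ℝ => b (a + t • c)) t₀ t = q := by
    refine (h.and_eventually self_mem_nhdsWithin).mono fun t ⟨⟨u, hu⟩, ht⟩ => ?_
    obtain ⟨rfl, hbu⟩ := hline u t hu
    rw [slope_def_field, hbu, hbu₀]
    field_simp [sub_ne_zero.2 ht]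
    ring
  exact tendsto_nhds_unique_of_frequently_eq (hasDerivAt_iff_tendsto_slope.1 hderiv)
    tendsto_const_nhds hslope

end Graph

section TangentShadow

variable {E F : Type*} [NormedAddCommGroup E] [NormedSpace ℝ E]
  [NormedAddCommGroup F] [NormedSpace ℝ F] (x : E) (L : (F × ℝ) ≃L[ℝ] E) (b : F → ℝ)

def tangentShadow : Set E :=
  {z | ∃ u, ∃ t ≠ (0 : ℝ), graphMap L b u = x + t • (z - x) ∧ IsGraphTangent L b u (z - x)}

def graphCone (p : F × ℝ) : E := x + p.2 • (graphMap L b p.1 - x)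

theorem tangentShadow_subset_image_graphCone :
    tangentShadow x L b ⊆
      graphCone x L b '' {p | p.2 ≠ 0 ∧ IsGraphTangent L b p.1 (graphMap L b p.1 - x)} := by
  rintro z ⟨u, t, ht, hu, htan⟩
  refine ⟨(u, t⁻¹), ⟨inv_ne_zero ht, ?_⟩, ?_⟩
  · rw [hu, add_sub_cancel_left]
    exact htan.smul t
  · simp only [graphCone, hu, add_sub_cancel_left, smul_smul, inv_mul_cancel₀ ht, one_smul,
      add_sub_cancel]

variable {b}

theorem hasFDerivAt_graphCone {p : F × ℝ} (hb : DifferentiableAt ℝ b p.1) :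
    HasFDerivAt (graphCone x L b)
      (p.2 • (fderiv ℝ (graphMap L b) p.1).comp (.fst ℝ F ℝ) +
        (ContinuousLinearMap.snd ℝ F ℝ).smulRight (graphMap L b p.1 - x)) p :=
  ((ContinuousLinearMap.snd ℝ F ℝ).hasFDerivAt.smul
    (((hasFDerivAt_graphMap hb).differentiableAt.hasFDerivAt.comp p
      (ContinuousLinearMap.fst ℝ F ℝ).hasFDerivAt).sub_const x)).const_add x

/-- At a point `(u, s)` where the ray from `x` is tangent to the graph, the differential of the
cone kills `(c, -s)`, `c` being the tangent preimage of `graphMap L b u - x`; so the shadow is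
null by Sard's lemma in equal dimensions. -/
theorem measure_tangentShadow_eq_zero [FiniteDimensional ℝ E] [MeasurableSpace E] [BorelSpace E]
    (μ : Measure E) [μ.IsAddHaarMeasure] (hb : Differentiable ℝ b) :
    μ (tangentShadow x L b) = 0 := by
  set crit := {p : F × ℝ | p.2 ≠ 0 ∧ IsGraphTangent L b p.1 (graphMap L b p.1 - x)}
  have hcone : graphCone x L b '' crit = (graphCone x L b ∘ L.symm) '' (L '' crit) := by
    simp only [image_image, Function.comp_apply, ContinuousLinearEquiv.symm_apply_apply]
  refine measure_mono_null ((tangentShadow_subset_image_graphCone x L b).trans hcone.le)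
    (addHaar_image_eq_zero_of_det_fderivWithin_eq_zero μ
      (fun q _ => (((hasFDerivAt_graphCone x L (hb _)).comp q
        (L.symm : E →L[ℝ] F × ℝ).hasFDerivAt)).hasFDerivWithinAt) ?_)
  rintro _ ⟨p, ⟨hp, htan⟩, rfl⟩
  rw [LinearMap.det_eq_zero_iff_ker_ne_bot, Submodule.ne_bot_iff]
  refine ⟨L ((L.symm (graphMap L b p.1 - x)).1, -p.2), ?_, ?_⟩
  · rw [IsGraphTangent] at htan
    simp only [LinearMap.mem_ker, ContinuousLinearMap.coe_coe, ContinuousLinearMap.comp_apply,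
      ContinuousLinearEquiv.coe_coe, ContinuousLinearEquiv.symm_apply_apply, add_apply,
      smul_apply, ContinuousLinearMap.coe_fst', fderiv_graphMap_apply (hb _), htan, Prod.mk.eta,
      ContinuousLinearEquiv.apply_symm_apply, ContinuousLinearMap.smulRight_apply,
      ContinuousLinearMap.coe_snd']
    rw [neg_smul, add_neg_cancel]
  · exact L.map_ne_zero_iff.2 fun h => hp (neg_eq_zero.1 (congrArg Prod.snd h))

end TangentShadow

section LocalGraphs

variable {E : Type*} [NormedAddCommGroup E] [NormedSpace ℝ E]
  (F : Type*) [NormedAddCommGroup F] [NormedSpace ℝ F]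

def IsLocallyInGraphs (Θ : Set E) : Prop :=
  ∀ θ ∈ Θ, ∃ U : Set E, IsOpen U ∧ θ ∈ U ∧ ∃ (L : (F × ℝ) ≃L[ℝ] E) (b : F → ℝ),
    Differentiable ℝ b ∧ Θ ∩ U ⊆ range (graphMap L b)

variable {F}

theorem exists_frequently_mem_of_infinite_segment_inter {Θ : Set E} (hΘ : IsClosed Θ) {x z : E}
    (h : (segment ℝ x z ∩ Θ).Infinite) :
    ∃ t₀ : ℝ, x + t₀ • (z - x) ∈ Θ ∧ ∃ᶠ t in 𝓝[≠] t₀, x + t • (z - x) ∈ Θ := by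
  set f : ℝ → E := fun t => x + t • (z - x)
  have hf : Continuous f := by fun_prop
  rw [segment_eq_image', ← image_inter_preimage] at h
  obtain ⟨t₀, -, ht₀⟩ :=
    (h.of_image f).exists_accPt_of_subset_isCompact isCompact_Icc inter_subset_left
  have hfreq : ∃ᶠ t in 𝓝[≠] t₀, f t ∈ Θ :=
    (accPt_iff_frequently_nhdsNE.1 ht₀).mono fun t ht => ht.2
  exact ⟨t₀, hΘ.mem_of_frequently_of_tendsto hfreq (hf.continuousAt.mono_left nhdsWithin_le_nhds),
    hfreq⟩

theorem mem_tangentShadow_of_frequently {Θ U : Set E} {L : (F × ℝ) ≃L[ℝ] E} {b : F → ℝ}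
    (hU : IsOpen U) (hb : Differentiable ℝ b) (hΘU : Θ ∩ U ⊆ range (graphMap L b)) {x z : E}
    {t₀ : ℝ} (ht₀ : t₀ ≠ 0) (hθ : x + t₀ • (z - x) ∈ Θ ∩ U)
    (h : ∃ᶠ t in 𝓝[≠] t₀, x + t • (z - x) ∈ Θ) :
    z ∈ tangentShadow x L b := by
  obtain ⟨u₀, hu₀⟩ := hΘU hθ
  have hnear : ∀ᶠ t in 𝓝[≠] t₀, x + t • (z - x) ∈ U :=
    nhdsWithin_le_nhds <| (Continuous.continuousAt (by fun_prop)).preimage_mem_nhds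
      (hU.mem_nhds hθ.2)
  exact ⟨u₀, t₀, ht₀, hu₀, .of_frequently_mem_range (hb u₀) hu₀
    ((h.and_eventually hnear).mono fun _ ht => hΘU ht)⟩

theorem IsLocallyInGraphs.ae_finite_segment_inter [FiniteDimensional ℝ E] [MeasurableSpace E]
    [BorelSpace E] {Θ : Set E} (hΘ : IsLocallyInGraphs F Θ) (hcomp : IsCompact Θ) {x : E}
    (hx : x ∉ Θ) (μ : Measure E) [μ.IsAddHaarMeasure] :
    ∀ᵐ z ∂μ, (segment ℝ x z ∩ Θ).Finite := by
  choose U hU hθU L b hb hΘU using hΘ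
  obtain ⟨s, hs⟩ := hcomp.elim_finite_subcover (fun θ : Θ => U θ θ.2) (fun θ => hU θ θ.2)
    fun θ hθ => mem_iUnion.2 ⟨⟨θ, hθ⟩, hθU θ hθ⟩
  have hae : ∀ᵐ z ∂μ, ∀ θ ∈ s, z ∉ tangentShadow x (L θ θ.2) (b θ θ.2) :=
    (eventually_all_finset s).2 fun θ _ =>
      measure_eq_zero_iff_ae_notMem.1 (measure_tangentShadow_eq_zero x _ μ (hb θ θ.2))
  filter_upwards [hae] with z hz
  by_contra hinf
  obtain ⟨t₀, hθ, hfreq⟩ := exists_frequently_mem_of_infinite_segment_inter hcomp.isClosed hinf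
  have ht₀ : t₀ ≠ 0 := by
    rintro rfl
    rw [zero_smul, add_zero] at hθ
    exact hx hθ
  obtain ⟨θ, hθs, hθU⟩ := mem_iUnion₂.1 (hs hθ)
  exact hz θ hθs
    (mem_tangentShadow_of_frequently (hU θ θ.2) (hb θ θ.2) (hΘU θ θ.2) ht₀ ⟨hθ, hθU⟩ hfreq)

end LocalGraphs

theorem IsC3Hypersurface.isLocallyInGraphs {d : ℕ} {Θ : Set (EuclideanSpace ℝ (Fin d))}
    (hΘ : IsC3Hypersurface Θ) : IsLocallyInGraphs (EuclideanSpace ℝ (Fin (d - 1))) Θ := by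
  intro θ hθ
  obtain ⟨ε, hε, T, b, hb, hΘb⟩ := hΘ θ hθ
  refine ⟨ball θ ε, isOpen_ball, mem_ball_self hε,
    (WithLp.prodContinuousLinearEquiv 2 ℝ _ ℝ).symm.trans T.toContinuousLinearEquiv, b,
    hb.differentiable (by norm_num), ?_⟩
  rw [hΘb]
  rintro _ ⟨⟨u, rfl⟩, -⟩
  exact ⟨u, rfl⟩

theorem exists_short_curve_finitely_meeting_hypersurface_general
    (d : ℕ) (Θ : Set (EuclideanSpace ℝ (Fin d)))
    (hcomp : IsCompact Θ) (hsurf : IsC3Hypersurface Θ) :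
    ∀ x ∈ Θᶜ, ∀ y ∈ Θᶜ, ∀ η > (0 : ℝ),
      ∃ γ : ℝ → EuclideanSpace ℝ (Fin d),
        ContinuousOn γ (Set.Icc 0 1) ∧ γ 0 = x ∧ γ 1 = y ∧
        curveLength γ < ENNReal.ofReal (‖y - x‖ + η) ∧
        (γ '' Set.Icc 0 1 ∩ Θ).Finite := by
  intro x hx y hy η hη
  obtain ⟨ε, hε, hyε⟩ := Metric.isOpen_iff.1 hcomp.isClosed.isOpen_compl y hy
  obtain ⟨z, hz, hxz⟩ := Measure.exists_mem_of_measure_ne_zero_of_ae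
    (measure_ball_pos volume y (lt_min hε (half_pos hη))).ne'
    (ae_restrict_of_ae (hsurf.isLocallyInGraphs.ae_finite_segment_inter hcomp hx volume))
  have hzy : segment ℝ z y ⊆ Θᶜ :=
    ((convex_ball y ε).segment_subset (ball_subset_ball (min_le_left _ _) hz)
      (mem_ball_self hε)).trans hyε
  have hzy' : dist z y < η / 2 := (mem_ball.1 hz).trans_le (min_le_right _ _)
  refine ⟨twoSegmentPath x z y, (continuous_twoSegmentPath x z y).continuousOn,
    twoSegmentPath_zero x z y, twoSegmentPath_one x z y, ?_, ?_⟩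
  · refine (eVariationOn_twoSegmentPath_le x z y).trans_lt
      ((ENNReal.ofReal_lt_ofReal_iff (by positivity)).2 ?_)
    linarith [dist_triangle x y z, dist_comm x y, dist_comm y z, dist_eq_norm y x]
  · refine hxz.subset fun p ⟨hp, hpΘ⟩ => ⟨?_, hpΘ⟩
    exact (twoSegmentPath_image_Icc_subset x z y hp).resolve_right fun h => hzy h hpΘ

/-- if `d ≥ 2` and `Θ ⊆ ℝ^d` is a nonempty compact `C³`-hypersurface of
positive reach, then any two points of `ℝ^d \ Θ` can be joined by a curve of length
arbitrarily close to their Euclidean distance which meets `Θ` only in finitely many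
points. -/
theorem exists_short_curve_finitely_meeting_hypersurface
    (d : ℕ) (hd : 2 ≤ d) (Θ : Set (EuclideanSpace ℝ (Fin d)))
    (hne : Θ.Nonempty) (hcomp : IsCompact Θ)
    (hreach : HasPositiveReach Θ) (hsurf : IsC3Hypersurface Θ) :
    ∀ x ∈ Θᶜ, ∀ y ∈ Θᶜ, ∀ η > (0 : ℝ),
      ∃ γ : ℝ → EuclideanSpace ℝ (Fin d),
        ContinuousOn γ (Set.Icc 0 1) ∧ γ 0 = x ∧ γ 1 = y ∧
        curveLength γ < ENNReal.ofReal (‖y - x‖ + η) ∧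
        (γ '' Set.Icc 0 1 ∩ Θ).Finite :=
  exists_short_curve_finitely_meeting_hypersurface_general d Θ hcomp hsurf
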